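/- arXiv:1703.06338 — 8 statements merged into one kernel-verified Lean document; each statement's English description precedes it below -/
import Mathlib

section
/- Let F be a finite family of at least p compact intervals on the real line (p ≥ q ≥ 2) such that among any p members of F, some q of them have a common point. Then F can be pierced by at most p - q + 1 points, i.e., there exists a set S of at most p - q + 1 real numbers such that every interval in F contains a point of S. -/
open scoped Classical

lemma pierce_aux {n : ℕ} (a b : Fin n → ℝ) (hab : ∀ i, a i ≤ b i) :
    ∀ k (T : Finset (Fin n)),
      (∀ D ⊆ T, (∀ i ∈ D, ∀ j ∈ D, i ≠ j →
          Disjoint (Set.Icc (a i) (b i)) (Set.Icc (a j) (b j))) → D.card ≤ k) →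
      ∃ S : Finset ℝ, S.card ≤ k ∧ ∀ i ∈ T, ∃ x ∈ S, x ∈ Set.Icc (a i) (b i) := by
  intro k
  induction k with
  | zero =>
    intro T hT
    refine ⟨∅, by simp, ?_⟩
    intro i hi
    have := hT {i} (by simpa using hi) (by simp)
    simp at this
  | succ k ih =>
    intro T hT
    rcases T.eq_empty_or_nonempty with rfl | hne
    · exact ⟨∅, by simp, by simp⟩
    obtain ⟨i0, hi0, hmin⟩ := T.exists_min_image b hne
    set x := b i0 with hx
    set T' := T.filter (fun i => x < a i) with hT'
    have hkey : ∀ D ⊆ T', (∀ i ∈ D, ∀ j ∈ D, i ≠ j →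
        Disjoint (Set.Icc (a i) (b i)) (Set.Icc (a j) (b j))) → D.card ≤ k := by
      intro D hD hdisj
      have hi0D : i0 ∉ D := by
        intro h
        have h1 : x < a i0 := (Finset.mem_filter.1 (hD h)).2
        exact absurd h1 (not_lt.2 (hab i0))
      have hins : insert i0 D ⊆ T := by
        intro j hj
        rcases Finset.mem_insert.1 hj with rfl | hj
        · exact hi0
        · exact (Finset.mem_filter.1 (hD hj)).1
      have hdisj' : ∀ i ∈ insert i0 D, ∀ j ∈ insert i0 D, i ≠ j →
          Disjoint (Set.Icc (a i) (b i)) (Set.Icc (a j) (b j)) := by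
        have hd0 : ∀ j ∈ D, Disjoint (Set.Icc (a i0) (b i0)) (Set.Icc (a j) (b j)) := by
          intro j hj
          have haj : x < a j := (Finset.mem_filter.1 (hD hj)).2
          rw [Set.disjoint_left]
          rintro y ⟨_, hy2⟩ ⟨hy3, _⟩
          simp only [← hx] at hy2
          linarith
        intro i hi j hj hij
        rcases Finset.mem_insert.1 hi with hi | hi <;>
          rcases Finset.mem_insert.1 hj with hj | hj
        · exact absurd (hi.trans hj.symm) hij
        · rw [hi]; exact hd0 j hj
        · rw [hj]; exact (hd0 i hi).symm
        · exact hdisj i hi j hj hij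
      have := hT (insert i0 D) hins hdisj'
      rwa [Finset.card_insert_of_notMem hi0D, Nat.succ_le_succ_iff] at this
    obtain ⟨S, hScard, hS⟩ := ih T' hkey
    refine ⟨insert x S, ?_, ?_⟩
    · calc (insert x S).card ≤ S.card + 1 := Finset.card_insert_le _ _
        _ ≤ k + 1 := by omega
    · intro i hi
      by_cases hcase : x < a i
      · obtain ⟨y, hy1, hy2⟩ := hS i (Finset.mem_filter.2 ⟨hi, hcase⟩)
        exact ⟨y, Finset.mem_insert_of_mem hy1, hy2⟩
      · exact ⟨x, Finset.mem_insert_self _ _,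
          ⟨le_of_not_gt hcase, hmin i hi⟩⟩

/-- Hadwiger–Debrunner theorem in dimension 1: a family of at least `p` compact
intervals on the real line satisfying the `(p,q)` property can be pierced by
`p - q + 1` points. -/
theorem stmt0 (p q n : ℕ) (hq : 2 ≤ q) (hpq : q ≤ p) (hn : p ≤ n)
    (a b : Fin n → ℝ) (hab : ∀ i, a i ≤ b i)
    (F : Fin n → Set ℝ) (hF : ∀ i, F i = Set.Icc (a i) (b i))
    (hprop : ∀ P : Finset (Fin n), P.card = p →
      ∃ Q ⊆ P, Q.card = q ∧ (⋂ i ∈ Q, F i).Nonempty) :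
    ∃ S : Finset ℝ, S.card ≤ p - q + 1 ∧ ∀ i, ∃ x ∈ S, x ∈ F i := by
  have hmain : ∀ D ⊆ (Finset.univ : Finset (Fin n)),
      (∀ i ∈ D, ∀ j ∈ D, i ≠ j →
        Disjoint (Set.Icc (a i) (b i)) (Set.Icc (a j) (b j))) → D.card ≤ p - q + 1 := by
    intro D _ hdisj
    by_contra hcard
    push_neg at hcard
    -- take a subset D' of D with card p - q + 2
    obtain ⟨D', hD'D, hD'card⟩ := Finset.exists_subset_card_eq (show p - q + 2 ≤ D.card by omega)
    -- extend D' to P with card p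
    have hle : D'.card ≤ p := by omega
    obtain ⟨P, hD'P, hPcard⟩ := Finset.exists_superset_card_eq hle (by
      simpa using hn)
    obtain ⟨Q, hQP, hQcard, y, hy⟩ := hprop P hPcard
    -- all intervals indexed by Q contain y
    have hyQ : ∀ i ∈ Q, y ∈ Set.Icc (a i) (b i) := by
      intro i hi
      have := Set.mem_iInter₂.1 hy i hi
      rwa [hF i] at this
    -- Q ∩ D' has at most one element
    have hQD : (Q ∩ D').card ≤ 1 := by
      rw [Finset.card_le_one]
      intro i hi j hj
      by_contra hij
      have hiD : i ∈ D := hD'D (Finset.mem_inter.1 hi).2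
      have hjD : j ∈ D := hD'D (Finset.mem_inter.1 hj).2
      have := hdisj i hiD j hjD hij
      exact (Set.disjoint_left.1 this (hyQ i (Finset.mem_inter.1 hi).1))
        (hyQ j (Finset.mem_inter.1 hj).1)
    have hQsplit : Q.card ≤ (Q ∩ D').card + (P \ D').card := by
      have : Q ⊆ (Q ∩ D') ∪ (P \ D') := by
        intro i hi
        by_cases h : i ∈ D'
        · exact Finset.mem_union_left _ (Finset.mem_inter.2 ⟨hi, h⟩)
        · exact Finset.mem_union_right _ (Finset.mem_sdiff.2 ⟨hQP hi, h⟩)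
      calc Q.card ≤ ((Q ∩ D') ∪ (P \ D')).card := Finset.card_le_card this
        _ ≤ _ := Finset.card_union_le _ _
    have hPD : (P \ D').card = p - (p - q + 2) := by
      rw [Finset.card_sdiff_of_subset hD'P, hPcard, hD'card]
    omega
  obtain ⟨S, hScard, hS⟩ := pierce_aux a b hab (p - q + 1) Finset.univ hmain
  exact ⟨S, hScard, fun i => by
    obtain ⟨x, hx1, hx2⟩ := hS i (Finset.mem_univ i)
    exact ⟨x, hx1, by rw [hF i]; exact hx2⟩⟩
end

section
/- Let F be a finite family of compact intervals on the real line, p ≥ q ≥ 2, |F| ≥ p, and suppose that every p-element subfamily of F contains at least r distinct q-element subfamilies with a common point, where r ≥ C(p-k-2, q) + (k+2)·C(p-k-2, q-1) + 1. Then F can be pierced by at most k + 1 points. -/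
open scoped Classical

/-- Greedy lemma: for any finite family of compact intervals indexed by `T`,
there is a pairwise-disjoint subfamily `D` and a piercing set `S` of the
whole family with `S.card ≤ D.card`. -/
lemma greedy_pierce {n : ℕ} (a b : Fin n → ℝ) (hab : ∀ i, a i ≤ b i)
    (F : Fin n → Set ℝ) (hF : ∀ i, F i = Set.Icc (a i) (b i)) :
    ∀ T : Finset (Fin n), ∃ D : Finset (Fin n), ∃ S : Finset ℝ,
      D ⊆ T ∧ (∀ i ∈ D, ∀ j ∈ D, i ≠ j → F i ∩ F j = ∅) ∧
      S.card ≤ D.card ∧ ∀ i ∈ T, ∃ x ∈ S, x ∈ F i := by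
  intro T
  induction T using Finset.strongInduction with
  | _ T ih =>
    rcases T.eq_empty_or_nonempty with rfl | hT
    · exact ⟨∅, ∅, Finset.Subset.refl _, by simp, by simp, by simp⟩
    · obtain ⟨i₀, hi₀T, hmin⟩ := T.exists_min_image b hT
      have hbi₀ : b i₀ ∈ F i₀ := by rw [hF]; exact ⟨hab i₀, le_refl _⟩
      set T' : Finset (Fin n) := T.filter (fun j => b i₀ ∉ F j) with hT'
      have hT'sub : T' ⊂ T := by
        refine Finset.ssubset_iff_of_subset (Finset.filter_subset _ _) |>.mpr ?_
        exact ⟨i₀, hi₀T, by simp [hT', hbi₀]⟩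
      have hsep : ∀ j ∈ T', b i₀ < a j := by
        intro j hj
        rw [hT', Finset.mem_filter] at hj
        by_contra hle
        push_neg at hle
        exact hj.2 (by rw [hF]; exact ⟨hle, hmin j hj.1⟩)
      obtain ⟨D', S', hD'T', hdisj', hcard', hpierce'⟩ := ih T' hT'sub
      have hi₀notT' : i₀ ∉ T' := by simp [hT', hbi₀]
      have hi₀notD' : i₀ ∉ D' := fun h => hi₀notT' (hD'T' h)
      refine ⟨insert i₀ D', insert (b i₀) S', ?_, ?_, ?_, ?_⟩
      · exact Finset.insert_subset hi₀T (hD'T'.trans (Finset.filter_subset _ _))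
      · intro i hi j hj hij
        have key : ∀ j' ∈ D', F i₀ ∩ F j' = ∅ := by
          intro j' hj'
          have hlt := hsep j' (hD'T' hj')
          ext x
          simp only [Set.mem_inter_iff, Set.mem_empty_iff_false, iff_false, hF,
            Set.mem_Icc]
          rintro ⟨⟨_, h1⟩, ⟨h2, _⟩⟩
          linarith
        rcases Finset.mem_insert.mp hi with hi' | hi
        · rcases Finset.mem_insert.mp hj with hj' | hj
          · exact absurd (hi'.trans hj'.symm) hij
          · rw [hi']; exact key j hj
        · rcases Finset.mem_insert.mp hj with hj' | hj
          · rw [hj', Set.inter_comm]; exact key i hi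
          · exact hdisj' i hi j hj hij
      · calc (insert (b i₀) S').card ≤ S'.card + 1 := Finset.card_insert_le _ _
          _ ≤ D'.card + 1 := by omega
          _ = (insert i₀ D').card := (Finset.card_insert_of_notMem hi₀notD').symm
      · intro i hiT
        by_cases hbi : b i₀ ∈ F i
        · exact ⟨b i₀, Finset.mem_insert_self _ _, hbi⟩
        · obtain ⟨x, hxS, hxF⟩ := hpierce' i (by simp [hT', hiT, hbi])
          exact ⟨x, Finset.mem_insert_of_mem hxS, hxF⟩

/-- Counting lemma: if `D ⊆ P` indexes pairwise disjoint sets, then every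
`q`-subset of `P` with nonempty intersection meets `D` in at most one point,
which bounds the number of such subsets. -/
lemma count_bound {n : ℕ} (F : Fin n → Set ℝ) (q : ℕ) (hq : 1 ≤ q)
    (P D : Finset (Fin n)) (hDP : D ⊆ P)
    (hdisj : ∀ i ∈ D, ∀ j ∈ D, i ≠ j → F i ∩ F j = ∅) :
    ((P.powersetCard q).filter
        (fun Q : Finset (Fin n) => (⋂ i ∈ Q, F i).Nonempty)).card ≤
      (P.card - D.card).choose q + D.card * (P.card - D.card).choose (q - 1) := by
  classical
  set E : Finset (Fin n) := P \ D with hE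
  have hEcard : E.card = P.card - D.card := Finset.card_sdiff_of_subset hDP
  have hsub : ((P.powersetCard q).filter
        (fun Q : Finset (Fin n) => (⋂ i ∈ Q, F i).Nonempty)) ⊆
      E.powersetCard q ∪
        D.biUnion (fun x => (E.powersetCard (q - 1)).image (insert x)) := by
    intro Q hQ
    rw [Finset.mem_filter, Finset.mem_powersetCard] at hQ
    obtain ⟨⟨hQP, hQcard⟩, x₀, hx₀⟩ := hQ
    have hx₀mem : ∀ i ∈ Q, x₀ ∈ F i := by
      intro i hi
      simpa using Set.mem_iInter₂.mp hx₀ i hi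
    have hcard1 : (Q ∩ D).card ≤ 1 := by
      rw [Finset.card_le_one]
      intro i hi j hj
      by_contra hij
      have h1 := (Finset.mem_inter.mp hi)
      have h2 := (Finset.mem_inter.mp hj)
      have := hdisj i h1.2 j h2.2 hij
      have : x₀ ∈ F i ∩ F j := ⟨hx₀mem i h1.1, hx₀mem j h2.1⟩
      rw [hdisj i h1.2 j h2.2 hij] at this
      exact this
    rcases Finset.eq_empty_or_nonempty (Q ∩ D) with hemp | ⟨x, hx⟩
    · apply Finset.mem_union_left
      rw [Finset.mem_powersetCard]
      refine ⟨?_, hQcard⟩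
      intro y hy
      rw [hE, Finset.mem_sdiff]
      refine ⟨hQP hy, fun hyD => ?_⟩
      have : y ∈ Q ∩ D := Finset.mem_inter.mpr ⟨hy, hyD⟩
      rw [hemp] at this
      exact absurd this (Finset.notMem_empty y)
    · apply Finset.mem_union_right
      have hxQ : x ∈ Q := (Finset.mem_inter.mp hx).1
      have hxD : x ∈ D := (Finset.mem_inter.mp hx).2
      rw [Finset.mem_biUnion]
      refine ⟨x, hxD, ?_⟩
      rw [Finset.mem_image]
      refine ⟨Q.erase x, ?_, Finset.insert_erase hxQ⟩
      rw [Finset.mem_powersetCard]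
      constructor
      · intro y hy
        have hyQ := Finset.mem_of_mem_erase hy
        have hyx : y ≠ x := Finset.ne_of_mem_erase hy
        rw [hE, Finset.mem_sdiff]
        refine ⟨hQP hyQ, fun hyD => ?_⟩
        have : y ∈ Q ∩ D := Finset.mem_inter.mpr ⟨hyQ, hyD⟩
        exact hyx (Finset.card_le_one.mp hcard1 y this x hx)
      · rw [Finset.card_erase_of_mem hxQ, hQcard]
  calc ((P.powersetCard q).filter
        (fun Q : Finset (Fin n) => (⋂ i ∈ Q, F i).Nonempty)).card
      ≤ (E.powersetCard q ∪
          D.biUnion (fun x => (E.powersetCard (q - 1)).image (insert x))).card :=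
        Finset.card_le_card hsub
    _ ≤ (E.powersetCard q).card +
          (D.biUnion (fun x => (E.powersetCard (q - 1)).image (insert x))).card :=
        Finset.card_union_le _ _
    _ ≤ (P.card - D.card).choose q + D.card * (P.card - D.card).choose (q - 1) := by
        have h1 : (E.powersetCard q).card = (P.card - D.card).choose q := by
          rw [Finset.card_powersetCard, hEcard]
        have h2 : (D.biUnion (fun x => (E.powersetCard (q - 1)).image (insert x))).card
            ≤ D.card * (P.card - D.card).choose (q - 1) := by
          calc (D.biUnion (fun x => (E.powersetCard (q - 1)).image (insert x))).card
              ≤ ∑ x ∈ D, ((E.powersetCard (q - 1)).image (insert x)).card :=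
                Finset.card_biUnion_le
            _ ≤ ∑ x ∈ D, (P.card - D.card).choose (q - 1) := by
                refine Finset.sum_le_sum fun x _ => ?_
                calc ((E.powersetCard (q - 1)).image (insert x)).card
                    ≤ (E.powersetCard (q - 1)).card := Finset.card_image_le
                  _ = (P.card - D.card).choose (q - 1) := by
                      rw [Finset.card_powersetCard, hEcard]
            _ = D.card * (P.card - D.card).choose (q - 1) := by
                rw [Finset.sum_const, smul_eq_mul]
        omega

/-- Proposition 2.7 (upper bound direction): a family of compact intervals
satisfying the `(p,q)_r` property with
`r ≥ C(p-k-2, q) + (k+2)·C(p-k-2, q-1) + 1` can be pierced by `k+1` points. -/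
theorem stmt1 (p q k r n : ℕ) (hq : 2 ≤ q) (hpq : q ≤ p) (hn : p ≤ n)
    (a b : Fin n → ℝ) (hab : ∀ i, a i ≤ b i)
    (F : Fin n → Set ℝ) (hF : ∀ i, F i = Set.Icc (a i) (b i))
    (hr : (p - k - 2).choose q + (k + 2) * (p - k - 2).choose (q - 1) + 1 ≤ r)
    (hprop : ∀ P : Finset (Fin n), P.card = p →
      r ≤ ((P.powersetCard q).filter
            (fun Q : Finset (Fin n) => (⋂ i ∈ Q, F i).Nonempty)).card) :
    ∃ S : Finset ℝ, S.card ≤ k + 1 ∧ ∀ i, ∃ x ∈ S, x ∈ F i := by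
  obtain ⟨D, S, _, hdisj, hcard, hpierce⟩ :=
    greedy_pierce a b hab F hF Finset.univ
  by_cases hD : D.card ≤ k + 1
  · exact ⟨S, hcard.trans hD, fun i => hpierce i (Finset.mem_univ i)⟩
  · exfalso
    push_neg at hD
    -- D has at least k+2 pairwise disjoint intervals
    set d : ℕ := min p (k + 2) with hd
    have hdD : d ≤ D.card := le_trans (min_le_right _ _) hD
    obtain ⟨D', hD'D, hD'card⟩ := Finset.exists_subset_card_eq hdD
    have hdisj' : ∀ i ∈ D', ∀ j ∈ D', i ≠ j → F i ∩ F j = ∅ :=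
      fun i hi j hj hij => hdisj i (hD'D hi) j (hD'D hj) hij
    have hdp : d ≤ p := min_le_left _ _
    obtain ⟨P, hD'P, hPcard⟩ :=
      Finset.exists_superset_card_eq (s := D') (n := p)
        (by rw [hD'card]; exact hdp) (by simpa using hn)
    have hcount := count_bound F q (by omega) P D' hD'P hdisj'
    rw [hPcard, hD'card] at hcount
    have hmain := hprop P hPcard
    -- now derive contradiction arithmetically
    rcases le_or_gt (k + 2) p with hk2 | hk2
    · have hdval : d = k + 2 := min_eq_right hk2
      rw [hdval] at hcount
      have heq : p - (k + 2) = p - k - 2 := by omega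
      rw [heq] at hcount
      omega
    · have hdval : d = p := min_eq_left (by omega)
      rw [hdval, Nat.sub_self] at hcount
      have h1 : Nat.choose 0 q = 0 := Nat.choose_eq_zero_of_lt (by omega)
      have h2 : Nat.choose 0 (q - 1) = 0 := Nat.choose_eq_zero_of_lt (by omega)
      rw [h1, h2] at hcount
      omega
end

section
/- For every p ≥ q ≥ 2 and 0 ≤ k with k + 2 ≤ p, there exists a family F_0 of p compact intervals on the real line that satisfies the (p,q)_r property with r = C(p-k-2, q) + (k+2)·C(p-k-2, q-1), but cannot be pierced by k + 1 points. -/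
open scoped Classical

/-- Proposition 2.7 (lower bound direction): there is a family of `p` compact
intervals satisfying the `(p,q)_r` property with
`r = C(p-k-2, q) + (k+2)·C(p-k-2, q-1)` that cannot be pierced by `k+1` points. -/
theorem stmt2 (p q k : ℕ) (hq : 2 ≤ q) (hpq : q ≤ p) (hk : k + 2 ≤ p) :
    ∃ F : Fin p → Set ℝ,
      (∀ i, ∃ a b : ℝ, a ≤ b ∧ F i = Set.Icc a b) ∧
      (∀ P : Finset (Fin p), P.card = p →
        (p - k - 2).choose q + (k + 2) * (p - k - 2).choose (q - 1) ≤
          ((P.powersetCard q).filter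
            (fun Q : Finset (Fin p) => (⋂ i ∈ Q, F i).Nonempty)).card) ∧
      ¬ ∃ S : Finset ℝ, S.card ≤ k + 1 ∧ ∀ i, ∃ x ∈ S, x ∈ F i := by
  refine ⟨fun i => if i.val < k + 2 then Set.Icc (i.val : ℝ) i.val
      else Set.Icc 0 (k + 1), ?_, ?_, ?_⟩
  · intro i
    by_cases h : i.val < k + 2
    · exact ⟨i.val, i.val, le_refl _, by simp [h]⟩
    · exact ⟨0, k + 1, by positivity, by simp [h]⟩
  · intro P hP
    have hPu : P = Finset.univ := Finset.eq_univ_of_card P (by simp [hP])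
    subst hPu
    set A : Finset (Fin p) := Finset.univ.filter (fun i => i.val < k + 2) with hA
    set B : Finset (Fin p) := Finset.univ.filter (fun i => ¬ i.val < k + 2) with hB
    have hAB : ∀ s ∈ A, ∀ t ∈ B, s ≠ t := by
      intro s hs t ht
      simp only [hA, hB, Finset.mem_filter] at hs ht
      intro h; exact ht.2 (h ▸ hs.2)
    have hcardA : A.card = k + 2 := by
      rw [hA]
      have : (Finset.univ.filter (fun i : Fin p => i.val < k + 2)).card
          = ((Finset.range p).filter (fun n => n < k + 2)).card := by
        apply Finset.card_bij (fun i _ => i.val)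
        · intro a ha
          simp only [Finset.mem_filter, Finset.mem_range] at *
          exact ⟨a.isLt, ha.2⟩
        · intro a _ b _ h; exact Fin.ext h
        · intro b hb
          simp only [Finset.mem_filter, Finset.mem_range] at hb
          exact ⟨⟨b, hb.1⟩, by simp [hb.2], rfl⟩
      rw [this]
      have : (Finset.range p).filter (fun n => n < k + 2) = Finset.range (k + 2) := by
        ext n
        simp only [Finset.mem_filter, Finset.mem_range]
        omega
      rw [this, Finset.card_range]
    have hcardB : B.card = p - (k + 2) := by
      have h1 : A.card + B.card = p := by
        rw [hA, hB, Finset.card_filter_add_card_filter_not]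
        simp
      omega
    -- S1 : q-subsets of B
    set S1 : Finset (Finset (Fin p)) := B.powersetCard q with hS1
    -- S2 : one small + (q-1) big
    set S2 : Finset (Finset (Fin p)) :=
      (A ×ˢ B.powersetCard (q - 1)).image (fun st => insert st.1 st.2) with hS2
    have hS1card : S1.card = (p - k - 2).choose q := by
      rw [hS1, Finset.card_powersetCard, hcardB, Nat.sub_sub]
    have hS2card : S2.card = (k + 2) * (p - k - 2).choose (q - 1) := by
      rw [hS2, Finset.card_image_of_injOn, Finset.card_product,
        Finset.card_powersetCard, hcardA, hcardB, Nat.sub_sub]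
      rintro ⟨s, T⟩ hsT ⟨s', T'⟩ hsT' h
      replace h : insert s T = insert s' T' := h
      simp only [Finset.mem_coe, Finset.mem_product, Finset.mem_powersetCard] at hsT hsT'
      have hss' : s = s' := by
        have hs : s ∈ insert s' T' := h ▸ Finset.mem_insert_self s T
        rcases Finset.mem_insert.mp hs with h' | h'
        · exact h'
        · exact absurd rfl (hAB s hsT.1 s (hsT'.2.1 h'))
      subst hss'
      have hTT' : T = T' := by
        ext x
        constructor
        · intro hx
          have : x ∈ insert s T' := h ▸ Finset.mem_insert_of_mem hx
          rcases Finset.mem_insert.mp this with h' | h'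
          · exact absurd (h' ▸ rfl) (Ne.symm (hAB s hsT.1 x (hsT.2.1 hx)))
          · exact h'
        · intro hx
          have : x ∈ insert s T := h ▸ Finset.mem_insert_of_mem hx
          rcases Finset.mem_insert.mp this with h' | h'
          · exact absurd (h' ▸ rfl) (Ne.symm (hAB s hsT.1 x (hsT'.2.1 hx)))
          · exact h'
      subst hTT'
      rfl
    have hdisj : Disjoint S1 S2 := by
      rw [Finset.disjoint_left]
      intro Q hQ1 hQ2
      rw [hS1, Finset.mem_powersetCard] at hQ1
      rw [hS2, Finset.mem_image] at hQ2
      obtain ⟨⟨s, T⟩, hsT, hQ⟩ := hQ2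
      simp only [Finset.mem_product] at hsT
      have : s ∈ Q := hQ ▸ Finset.mem_insert_self s T
      exact hAB s hsT.1 s (hQ1.1 this) rfl
    have hsub : S1 ∪ S2 ⊆ (Finset.univ.powersetCard q).filter
        (fun Q : Finset (Fin p) => (⋂ i ∈ Q, (if i.val < k + 2 then Set.Icc (i.val : ℝ) i.val
          else Set.Icc 0 (k + 1))).Nonempty) := by
      intro Q hQ
      rcases Finset.mem_union.mp hQ with hQ | hQ
      · rw [hS1, Finset.mem_powersetCard] at hQ
        rw [Finset.mem_filter, Finset.mem_powersetCard]
        refine ⟨⟨Finset.subset_univ Q, hQ.2⟩, ⟨0, ?_⟩⟩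
        simp only [Set.mem_iInter]
        intro i hi
        have : ¬ i.val < k + 2 := by
          have := hQ.1 hi; rw [hB, Finset.mem_filter] at this; exact this.2
        simp only [this, if_false]
        exact ⟨le_refl 0, by positivity⟩
      · rw [hS2, Finset.mem_image] at hQ
        obtain ⟨⟨s, T⟩, hsT, hQeq⟩ := hQ
        simp only [Finset.mem_product, Finset.mem_powersetCard] at hsT
        have hsA : s.val < k + 2 := by
          have := hsT.1; rw [hA, Finset.mem_filter] at this; exact this.2
        have hsnT : s ∉ T := fun h => hAB s hsT.1 s (hsT.2.1 h) rfl
        rw [Finset.mem_filter, Finset.mem_powersetCard]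
        refine ⟨⟨Finset.subset_univ Q, ?_⟩, ⟨(s.val : ℝ), ?_⟩⟩
        · rw [← hQeq, Finset.card_insert_of_notMem hsnT, hsT.2.2]
          omega
        · simp only [Set.mem_iInter]
          intro i hi
          rw [← hQeq] at hi
          rcases Finset.mem_insert.mp hi with h' | h'
          · subst h'; simp [hsA]
          · have : ¬ i.val < k + 2 := by
              have := hsT.2.1 h'; rw [hB, Finset.mem_filter] at this; exact this.2
            simp only [this, if_false]
            constructor
            · positivity
            · have : (s.val : ℝ) ≤ (k + 1 : ℕ) := by exact_mod_cast Nat.le_of_lt_succ hsA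
              simpa using this
    calc (p - k - 2).choose q + (k + 2) * (p - k - 2).choose (q - 1)
        = S1.card + S2.card := by rw [hS1card, hS2card]
      _ = (S1 ∪ S2).card := (Finset.card_union_of_disjoint hdisj).symm
      _ ≤ _ := Finset.card_le_card hsub
  · rintro ⟨S, hScard, hS⟩
    have hsub : (Finset.range (k + 2)).image (Nat.cast : ℕ → ℝ) ⊆ S := by
      intro x hx
      rw [Finset.mem_image] at hx
      obtain ⟨n, hn, rfl⟩ := hx
      rw [Finset.mem_range] at hn
      obtain ⟨y, hyS, hy⟩ := hS ⟨n, lt_of_lt_of_le hn hk⟩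
      simp only [hn, if_true] at hy
      have : y = (n : ℝ) := le_antisymm hy.2 hy.1
      exact this ▸ hyS
    have hcard : ((Finset.range (k + 2)).image (Nat.cast : ℕ → ℝ)).card = k + 2 := by
      rw [Finset.card_image_of_injective _ (fun a b => by exact_mod_cast id), Finset.card_range]
    have := Finset.card_le_card hsub
    omega
end

section
/- Let F be an indexed family of p convex sets in ℝ^d consisting of m pairwise disjoint nonempty sets together with p - m copies of a convex set containing all of them, where m ≥ 1 and p - m ≥ q - 1 ≥ 0. Then the number of q-element index subsets whose corresponding sets have a common point is exactly C(p-m, q) + m·C(p-m, q-1). -/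
open scoped Classical

/-- Counting identity for the Montejano–Soberón lower-bound example: a family of
`m` pairwise disjoint nonempty convex sets together with `p - m` copies of a
convex set containing all of them has exactly
`C(p-m, q) + m·C(p-m, q-1)` intersecting `q`-tuples. -/
theorem stmt4 (d p q m : ℕ) (hm : 1 ≤ m) (hq1 : 1 ≤ q) (hq : q - 1 ≤ p - m)
    (hmp : m ≤ p)
    (F : Fin p → Set (EuclideanSpace ℝ (Fin d)))
    (B : Set (EuclideanSpace ℝ (Fin d))) (hB : Convex ℝ B)
    (hconv : ∀ i, Convex ℝ (F i))
    (hne : ∀ i : Fin p, (i : ℕ) < m → (F i).Nonempty)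
    (hdisj : ∀ i j : Fin p, (i : ℕ) < m → (j : ℕ) < m → i ≠ j → F i ∩ F j = ∅)
    (hsub : ∀ i : Fin p, (i : ℕ) < m → F i ⊆ B)
    (hcopy : ∀ i : Fin p, m ≤ (i : ℕ) → F i = B) :
    ((Finset.univ.powersetCard q).filter
        (fun Q : Finset (Fin p) => (⋂ i ∈ Q, F i).Nonempty)).card =
      (p - m).choose q + m * (p - m).choose (q - 1) := by
  classical
  have hp0 : 0 < p := lt_of_lt_of_le hm hmp
  set S : Finset (Fin p) := Finset.univ.filter (fun i : Fin p => (i : ℕ) < m) with hS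
  set T : Finset (Fin p) := Finset.univ.filter (fun i : Fin p => ¬ (i : ℕ) < m) with hT
  have hScard : S.card = m := by
    rw [hS, Finset.card_filter,
      Fin.sum_univ_eq_sum_range (fun i => if i < m then (1:ℕ) else 0) p, ← Finset.card_filter]
    have : Finset.filter (fun i => i < m) (Finset.range p) = Finset.range m := by
      ext x; simp; omega
    rw [this, Finset.card_range]
  have hTcard : T.card = p - m := by
    rw [hT, Finset.card_filter,
      Fin.sum_univ_eq_sum_range (fun i => if ¬ i < m then (1:ℕ) else 0) p, ← Finset.card_filter]
    have : Finset.filter (fun i => ¬ i < m) (Finset.range p) = Finset.Ico m p := by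
      ext x; simp; omega
    rw [this, Nat.card_Ico]
  -- B is nonempty
  have hz : (0 : ℕ) < m := hm
  have hBne : B.Nonempty := by
    obtain ⟨x, hx⟩ := hne ⟨0, hp0⟩ hz
    exact ⟨x, hsub ⟨0, hp0⟩ hz hx⟩
  -- the key set equality
  have key : ((Finset.univ.powersetCard q).filter
        (fun Q : Finset (Fin p) => (⋂ i ∈ Q, F i).Nonempty)) =
      T.powersetCard q ∪ S.biUnion (fun i => (T.powersetCard (q-1)).image (insert i)) := by
    ext Q
    simp only [Finset.mem_filter, Finset.mem_powersetCard, Finset.mem_union,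
      Finset.mem_biUnion, Finset.mem_image, Finset.subset_univ, true_and]
    constructor
    · rintro ⟨hcard, x, hx⟩
      simp only [Set.mem_iInter] at hx
      by_cases hsmall : ∃ i ∈ Q, (i : ℕ) < m
      · obtain ⟨i, hiQ, him⟩ := hsmall
        right
        refine ⟨i, by simp [hS, him], Q.erase i, ⟨?_, ?_⟩, ?_⟩
        · intro j hj
          simp only [Finset.mem_erase] at hj
          simp only [hT, Finset.mem_filter, Finset.mem_univ, true_and]
          intro hjm
          have := hdisj i j him hjm (Ne.symm hj.1)
          exact absurd (Set.mem_inter (hx i hiQ) (hx j hj.2)) (by rw [this]; simp)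
        · rw [Finset.card_erase_of_mem hiQ, hcard]
        · exact Finset.insert_erase hiQ
      · left
        refine ⟨fun j hj => ?_, hcard⟩
        simp only [hT, Finset.mem_filter, Finset.mem_univ, true_and]
        exact fun hjm => hsmall ⟨j, hj, hjm⟩
    · rintro (⟨hsub', hcard⟩ | ⟨i, hiS, R, ⟨hRsub, hRcard⟩, rfl⟩)
      · refine ⟨hcard, ?_⟩
        obtain ⟨x, hx⟩ := hBne
        refine ⟨x, ?_⟩
        simp only [Set.mem_iInter]
        intro j hj
        have : ¬ (j : ℕ) < m := by
          have := hsub' hj; simp only [hT, Finset.mem_filter] at this; exact this.2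
        rw [hcopy j (by omega)]; exact hx
      · have him : (i : ℕ) < m := by
          simp only [hS, Finset.mem_filter] at hiS; exact hiS.2
        constructor
        · rw [Finset.card_insert_of_notMem, hRcard]
          · omega
          · intro hiR
            have := hRsub hiR
            simp only [hT, Finset.mem_filter] at this
            exact this.2 him
        · obtain ⟨x, hx⟩ := hne i him
          refine ⟨x, ?_⟩
          simp only [Set.mem_iInter]
          intro j hj
          rcases Finset.mem_insert.mp hj with rfl | hjR
          · exact hx
          · have : ¬ (j : ℕ) < m := by
              have := hRsub hjR; simp only [hT, Finset.mem_filter] at this; exact this.2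
            rw [hcopy j (by omega)]
            exact hsub i him hx
  rw [key]
  have hdisjU : Disjoint (T.powersetCard q)
      (S.biUnion (fun i => (T.powersetCard (q-1)).image (insert i))) := by
    rw [Finset.disjoint_left]
    intro Q hQ hQ'
    simp only [Finset.mem_biUnion, Finset.mem_image] at hQ'
    obtain ⟨i, hiS, R, hR, rfl⟩ := hQ'
    rw [Finset.mem_powersetCard] at hQ
    have := hQ.1 (Finset.mem_insert_self i R)
    simp only [hT, Finset.mem_filter] at this
    simp only [hS, Finset.mem_filter] at hiS
    exact this.2 hiS.2
  rw [Finset.card_union_of_disjoint hdisjU]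
  rw [Finset.card_powersetCard, hTcard]
  congr 1
  have hpair : ∀ i ∈ S, ∀ j ∈ S, i ≠ j →
      Disjoint ((T.powersetCard (q-1)).image (insert i))
        ((T.powersetCard (q-1)).image (insert j)) := by
    intro i hiS j hjS hij
    simp only [Finset.disjoint_left]
    intro Q hQ hQ'
    simp only [Finset.mem_image] at hQ hQ'
    obtain ⟨R, hR, rfl⟩ := hQ
    obtain ⟨R', hR', hR'eq⟩ := hQ'
    rw [Finset.mem_powersetCard] at hR hR'
    have hiQ : i ∈ insert j R' := by rw [hR'eq]; exact Finset.mem_insert_self i R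
    rcases Finset.mem_insert.mp hiQ with h | h
    · exact hij h
    · have := hR'.1 h
      simp only [hT, Finset.mem_filter] at this
      simp only [hS, Finset.mem_filter] at hiS
      exact this.2 hiS.2
  rw [Finset.card_biUnion hpair]
  have : ∀ i ∈ S, ((T.powersetCard (q-1)).image (insert i)).card = (p-m).choose (q-1) := by
      intro i hiS
      rw [Finset.card_image_of_injOn, Finset.card_powersetCard, hTcard]
      intro R hR R' hR' hRR'
      rw [Finset.mem_coe, Finset.mem_powersetCard] at hR hR'
      have hiR : i ∉ R := fun h => by
        have := hR.1 h; simp only [hT, Finset.mem_filter] at this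
        simp only [hS, Finset.mem_filter] at hiS
        exact this.2 hiS.2
      have hiR' : i ∉ R' := fun h => by
        have := hR'.1 h; simp only [hT, Finset.mem_filter] at this
        simp only [hS, Finset.mem_filter] at hiS
        exact this.2 hiS.2
      have := congrArg (Finset.erase · i) hRR'
      simpa [Finset.erase_insert hiR, Finset.erase_insert hiR'] using this
  rw [Finset.sum_congr rfl this, Finset.sum_const, smul_eq_mul, hScard]
end

section
/- Let F be a finite family of compact convex sets in the plane such that every two members of F intersect. Define x_0 to be the lexicographic minimum, over all pairs A, B ∈ F, of lexmax(A ∩ B), where lexmax(K) is the lexicographically maximal point of a compact set K, and let A, B ∈ F attain this minimum. Then for every C ∈ F with C ∩ A ∩ B ≠ ∅, the point x_0 lies in C. -/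
/-- Lexicographic order on `ℝ²`: `x ≤ y` iff `x.1 < y.1`, or `x.1 = y.1` and
`x.2 ≤ y.2`. -/
def lexLE (x y : ℝ × ℝ) : Prop := x.1 < y.1 ∨ (x.1 = y.1 ∧ x.2 ≤ y.2)

/-- `z` is the lexicographically maximal point of `K`. -/
def IsLexMax (z : ℝ × ℝ) (K : Set (ℝ × ℝ)) : Prop := z ∈ K ∧ ∀ y ∈ K, lexLE y z

/-!
Write `A = F a`, `B = F b`, `C = F c` and let `L` be the vertical line through `x₀`. The set
`A ∩ C` contains a point of `A ∩ B ∩ C`, which lies weakly left of `L`, and its lexicographic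
maximum `m`, which by minimality of `x₀` lies lexicographically above `x₀`; so `A ∩ C` meets `L`
in a point `p`, which can be taken at or above `x₀` unless `m` lies strictly right of `L`.
Likewise `B ∩ C` gives `q` and `m'`. If `p` and `q` lie on opposite sides of `x₀`, then `x₀ ∈ C`
by convexity. If both are at or above `x₀`, the lower one lies in `A ∩ B` and hence is `x₀`. If
both are strictly below, then near `x₀` the triangles `x₀ p m ⊆ A` and `x₀ q m' ⊆ B` overlap
strictly right of `L`, contradicting the maximality of `x₀` in `A ∩ B`.
-/

open Set

lemma lexLE.fst_le {x y : ℝ × ℝ} (h : lexLE x y) : x.1 ≤ y.1 := by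
  rcases h with h | ⟨h, -⟩
  exacts [h.le, h.le]

lemma IsLexMax.fst_le {x z : ℝ × ℝ} {K : Set (ℝ × ℝ)} (hx : IsLexMax x K) (hz : z ∈ K) :
    z.1 ≤ x.1 :=
  (hx.2 z hz).fst_le

lemma IsLexMax.eq_of_fst_eq_of_snd_le {x z : ℝ × ℝ} {K : Set (ℝ × ℝ)} (hx : IsLexMax x K)
    (hz : z ∈ K) (h1 : z.1 = x.1) (h2 : x.2 ≤ z.2) : z = x := by
  rcases hx.2 z hz with h | ⟨-, h⟩
  · exact absurd h1 h.ne
  · exact Prod.ext h1 (le_antisymm h h2)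

lemma exists_isLexMax {K : Set (ℝ × ℝ)} (hK : IsCompact K) (hne : K.Nonempty) :
    ∃ z, IsLexMax z K := by
  obtain ⟨z₁, hz₁K, hz₁⟩ := hK.exists_isMaxOn hne continuous_fst.continuousOn
  obtain ⟨z, ⟨hzK, hz1⟩, hz⟩ :=
    (hK.inter_right (isClosed_eq continuous_fst continuous_const)).exists_isMaxOn
      ⟨z₁, hz₁K, rfl⟩ continuous_snd.continuousOn
  refine ⟨z, hzK, fun y hy => ?_⟩
  have hy1 : y.1 ≤ z₁.1 := hz₁ hy
  rcases hy1.lt_or_eq with h | h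
  · exact Or.inl (hz1 ▸ h)
  · exact Or.inr ⟨h.trans hz1.symm, hz ⟨hy, h⟩⟩

lemma Convex.mem_of_fst_eq_of_snd_mem_Icc {K : Set (ℝ × ℝ)} (hK : Convex ℝ K)
    {u v y : ℝ × ℝ} (hu : u ∈ K) (hv : v ∈ K) (hu1 : u.1 = y.1) (hv1 : v.1 = y.1)
    (hy : y.2 ∈ Icc u.2 v.2) : y ∈ K := by
  have hL : Convex ℝ (K ∩ {z | z.1 = y.1}) :=
    hK.inter (convex_hyperplane (LinearMap.fst ℝ ℝ ℝ).isLinear _)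
  obtain ⟨z, ⟨hzK, hz1⟩, hz2⟩ :=
    hL.isPreconnected.intermediate_value ⟨hu, hu1⟩ ⟨hv, hv1⟩ continuous_snd.continuousOn hy
  rwa [← Prod.ext hz1 hz2]

lemma Convex.exists_fst_eq_of_lexLE {K : Set (ℝ × ℝ)} (hK : Convex ℝ K) {w m x : ℝ × ℝ}
    (hw : w ∈ K) (hm : m ∈ K) (hwx : w.1 ≤ x.1) (hxm : lexLE x m) :
    ∃ p ∈ K, p.1 = x.1 ∧ (x.2 ≤ p.2 ∨ x.1 < m.1) := by
  rcases hxm with h | ⟨h, h'⟩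
  · obtain ⟨p, hp, hp1⟩ := hK.isPreconnected.intermediate_value hw hm
      continuous_fst.continuousOn ⟨hwx, h.le⟩
    exact ⟨p, hp, hp1, Or.inr h⟩
  · exact ⟨m, hm, h.symm, Or.inl h'⟩

lemma Convex.add_smul_sub_add_smul_sub_mem {E : Type*} [AddCommGroup E] [Module ℝ E]
    {s : Set E} (hs : Convex ℝ s) {x y z : E} (hx : x ∈ s) (hy : y ∈ s) (hz : z ∈ s)
    {a b : ℝ} (ha : 0 ≤ a) (hb : 0 ≤ b) (hab : a + b ≤ 1) :
    x + a • (y - x) + b • (z - x) ∈ s := by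
  rcases (add_nonneg ha hb).eq_or_lt with h | h
  · obtain ⟨rfl, rfl⟩ : a = 0 ∧ b = 0 := ⟨by linarith, by linarith⟩
    simpa using hx
  -- The point is `x + (a + b) • (u - x)` with `u` on the segment `[y, z]`.
  have hyz := hs.add_smul_sub_mem hy hz
    ⟨div_nonneg hb h.le, (div_le_one h).2 (by linarith)⟩
  convert hs.add_smul_sub_mem hx hyz ⟨h.le, hab⟩ using 1
  simp only [smul_sub, smul_add, smul_smul, mul_div_cancel₀ _ h.ne', add_smul]
  abel

lemma Convex.exists_add_smul_sub_mem_of_slope_le {B : Set (ℝ × ℝ)} (hB : Convex ℝ B)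
    {x q m m' : ℝ × ℝ} (hx : x ∈ B) (hq : q ∈ B) (hm' : m' ∈ B) (hq1 : q.1 = x.1)
    (hq2 : q.2 < x.2) (hm1 : x.1 ≤ m.1) (hm'1 : x.1 < m'.1)
    (hslope : (m.2 - x.2) * (m'.1 - x.1) ≤ (m'.2 - x.2) * (m.1 - x.1)) :
    ∃ t ∈ Ioc (0 : ℝ) 1, x + t • (m - x) ∈ B := by
  -- Solve `k • (m - x) = c₁ • (m' - x) + c₂ • (q - x)` and normalise so that `k + c₁ + c₂ = 1`.
  set k := (m'.1 - x.1) * (x.2 - q.2)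
  set c₁ := (m.1 - x.1) * (x.2 - q.2)
  set c₂ := (m'.2 - x.2) * (m.1 - x.1) - (m.2 - x.2) * (m'.1 - x.1)
  have hk : 0 < k := mul_pos (by linarith) (by linarith)
  have hc₁ : 0 ≤ c₁ := mul_nonneg (by linarith) (by linarith)
  have hc₂ : 0 ≤ c₂ := sub_nonneg.2 hslope
  have hS : 0 < k + c₁ + c₂ := by linarith
  refine ⟨k / (k + c₁ + c₂), ⟨div_pos hk hS, (div_le_one hS).2 (by linarith)⟩, ?_⟩
  convert hB.add_smul_sub_add_smul_sub_mem hx hm' hq (div_nonneg hc₁ hS.le)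
    (div_nonneg hc₂ hS.le) (by rw [← add_div, div_le_one hS]; linarith) using 1
  ext
  · simp only [Prod.fst_add, Prod.smul_fst, Prod.fst_sub, smul_eq_mul, hq1, k, c₁]
    field_simp
    ring
  · simp only [Prod.snd_add, Prod.smul_snd, Prod.snd_sub, smul_eq_mul, k, c₁, c₂]
    field_simp
    ring

lemma exists_mem_inter_fst_lt_of_slope_le {A B : Set (ℝ × ℝ)} (hA : Convex ℝ A)
    (hB : Convex ℝ B) {x q m m' : ℝ × ℝ} (hxA : x ∈ A) (hxB : x ∈ B) (hqB : q ∈ B)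
    (hmA : m ∈ A) (hm'B : m' ∈ B) (hq1 : q.1 = x.1) (hq2 : q.2 < x.2) (hm1 : x.1 < m.1)
    (hm'1 : x.1 < m'.1) (hslope : (m.2 - x.2) * (m'.1 - x.1) ≤ (m'.2 - x.2) * (m.1 - x.1)) :
    ∃ z ∈ A ∩ B, x.1 < z.1 := by
  obtain ⟨t, ht, hzB⟩ :=
    hB.exists_add_smul_sub_mem_of_slope_le hxB hqB hm'B hq1 hq2 hm1.le hm'1 hslope
  refine ⟨_, ⟨hA.add_smul_sub_mem hxA hmA ⟨ht.1.le, ht.2⟩, hzB⟩, ?_⟩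
  simpa using mul_pos ht.1 (sub_pos.2 hm1)

lemma exists_mem_inter_fst_lt_of_snd_lt {A B : Set (ℝ × ℝ)} (hA : Convex ℝ A)
    (hB : Convex ℝ B) {x p q m m' : ℝ × ℝ} (hxA : x ∈ A) (hxB : x ∈ B) (hpA : p ∈ A)
    (hqB : q ∈ B) (hmA : m ∈ A) (hm'B : m' ∈ B) (hp1 : p.1 = x.1) (hq1 : q.1 = x.1)
    (hp2 : p.2 < x.2) (hq2 : q.2 < x.2) (hm1 : x.1 < m.1) (hm'1 : x.1 < m'.1) :
    ∃ z ∈ A ∩ B, x.1 < z.1 := by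
  rcases le_total ((m.2 - x.2) * (m'.1 - x.1)) ((m'.2 - x.2) * (m.1 - x.1)) with h | h
  · exact exists_mem_inter_fst_lt_of_slope_le hA hB hxA hxB hqB hmA hm'B hq1 hq2 hm1 hm'1 h
  · rw [inter_comm]
    exact exists_mem_inter_fst_lt_of_slope_le hB hA hxB hxA hpA hm'B hmA hp1 hp2 hm'1 hm1 h

lemma IsLexMax.eq_or_eq_of_snd_le {A B : Set (ℝ × ℝ)} (hA : Convex ℝ A) (hB : Convex ℝ B)
    {x u v : ℝ × ℝ} (hx : IsLexMax x (A ∩ B)) (hu : u ∈ A) (hv : v ∈ B) (hu1 : u.1 = x.1)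
    (hv1 : v.1 = x.1) (hu2 : x.2 ≤ u.2) (hv2 : x.2 ≤ v.2) : u = x ∨ v = x := by
  rcases le_total u.2 v.2 with h | h
  · have huB : u ∈ B :=
      hB.mem_of_fst_eq_of_snd_mem_Icc hx.1.2 hv hu1.symm (hv1.trans hu1.symm) ⟨hu2, h⟩
    exact Or.inl (hx.eq_of_fst_eq_of_snd_le ⟨hu, huB⟩ hu1 hu2)
  · have hvA : v ∈ A :=
      hA.mem_of_fst_eq_of_snd_mem_Icc hx.1.1 hu hv1.symm (hu1.trans hv1.symm) ⟨hv2, h⟩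
    exact Or.inr (hx.eq_of_fst_eq_of_snd_le ⟨hvA, hv⟩ hv1 hv2)

theorem stmt6_general (n : ℕ) (F : Fin n → Set (ℝ × ℝ))
    (hcomp : ∀ i, IsCompact (F i)) (hconv : ∀ i, Convex ℝ (F i))
    (a b : Fin n) (x0 : ℝ × ℝ) (hmax : IsLexMax x0 (F a ∩ F b))
    (hmin : ∀ i j : Fin n, ∀ z : ℝ × ℝ, IsLexMax z (F i ∩ F j) → lexLE x0 z)
    (c : Fin n) (hc : (F c ∩ (F a ∩ F b)).Nonempty) :
    x0 ∈ F c := by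
  obtain ⟨w, hwC, hwA, hwB⟩ := hc
  have hw1 : w.1 ≤ x0.1 := hmax.fst_le ⟨hwA, hwB⟩
  obtain ⟨m, hm⟩ := exists_isLexMax ((hcomp a).inter_right (hcomp c).isClosed) ⟨w, hwA, hwC⟩
  obtain ⟨m', hm'⟩ := exists_isLexMax ((hcomp b).inter_right (hcomp c).isClosed) ⟨w, hwB, hwC⟩
  obtain ⟨p, ⟨hpA, hpC⟩, hp1, hp⟩ :=
    ((hconv a).inter (hconv c)).exists_fst_eq_of_lexLE ⟨hwA, hwC⟩ hm.1 hw1 (hmin a c m hm)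
  obtain ⟨q, ⟨hqB, hqC⟩, hq1, hq⟩ :=
    ((hconv b).inter (hconv c)).exists_fst_eq_of_lexLE ⟨hwB, hwC⟩ hm'.1 hw1 (hmin b c m' hm')
  rcases lt_or_ge p.2 x0.2 with hp2 | hp2 <;> rcases lt_or_ge q.2 x0.2 with hq2 | hq2
  · obtain ⟨z, hz, hz1⟩ := exists_mem_inter_fst_lt_of_snd_lt (hconv a) (hconv b) hmax.1.1
      hmax.1.2 hpA hqB hm.1.1 hm'.1.1 hp1 hq1 hp2 hq2 (hp.resolve_left hp2.not_ge)
      (hq.resolve_left hq2.not_ge)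
    exact absurd (hmax.fst_le hz) hz1.not_ge
  · exact (hconv c).mem_of_fst_eq_of_snd_mem_Icc hpC hqC hp1 hq1 ⟨hp2.le, hq2⟩
  · exact (hconv c).mem_of_fst_eq_of_snd_mem_Icc hqC hpC hq1 hp1 ⟨hq2.le, hp2⟩
  · rcases hmax.eq_or_eq_of_snd_le (hconv a) (hconv b) hpA hqB hp1 hq1 hp2 hq2 with h | h
    exacts [h ▸ hpC, h ▸ hqC]

/-- Case (1) of the Montejano–Soberón lemma for `d = 2`: if `x₀` is the
lexicographic minimum over pairs `A, B ∈ F` of `lexmax(A ∩ B)`, attained at the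
pair `(A, B) = (F a, F b)`, then every member of `F` meeting `A ∩ B`
contains `x₀`. -/
theorem stmt6 (n : ℕ) (F : Fin n → Set (ℝ × ℝ))
    (hcomp : ∀ i, IsCompact (F i)) (hconv : ∀ i, Convex ℝ (F i))
    (hint : ∀ i j, (F i ∩ F j).Nonempty)
    (a b : Fin n) (x0 : ℝ × ℝ) (hmax : IsLexMax x0 (F a ∩ F b))
    (hmin : ∀ i j : Fin n, ∀ z : ℝ × ℝ, IsLexMax z (F i ∩ F j) → lexLE x0 z)
    (c : Fin n) (hc : (F c ∩ (F a ∩ F b)).Nonempty) :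
    x0 ∈ F c :=
  stmt6_general n F hcomp hconv a b x0 hmax hmin c hc
end

section
/- For any finite family F of compact convex sets in the plane, there exist A, B ∈ F and a line ℓ ⊆ ℝ² such that every C ∈ F satisfying A ∩ C ≠ ∅ and B ∩ C ≠ ∅ intersects ℓ. -/
/-- Crossing lemma: a convex set containing points on both sides of a level set
of a continuous linear functional meets that level set. -/
lemma cross_level {C : Set (ℝ × ℝ)} (hC : Convex ℝ C) (g : (ℝ × ℝ) →L[ℝ] ℝ)
    {c : ℝ} {x y : ℝ × ℝ} (hx : x ∈ C) (hy : y ∈ C)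
    (h1 : g x ≤ c) (h2 : c ≤ g y) : ∃ z ∈ C, g z = c := by
  have hcont : ContinuousOn (fun t : ℝ => g ((1 - t) • x + t • y)) (Set.Icc 0 1) := by
    fun_prop
  have hsub := intermediate_value_Icc (by norm_num : (0:ℝ) ≤ 1) hcont
  have hc : c ∈ Set.Icc ((fun t : ℝ => g ((1 - t) • x + t • y)) 0)
      ((fun t : ℝ => g ((1 - t) • x + t • y)) 1) := by
    simp only []
    constructor <;> simp [h1, h2]
  obtain ⟨t, ht, hgt⟩ := hsub hc
  refine ⟨(1 - t) • x + t • y, ?_, hgt⟩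
  exact hC hx hy (by linarith [ht.2]) ht.1 (by ring)

/-- The Montejano–Soberón lemma for `d = 2`: for any finite family of compact
convex sets in the plane there are members `A, B` and a line `ℓ` such that any
member intersecting both `A` and `B` intersects `ℓ`. -/
theorem stmt7 (n : ℕ) (hn : 1 ≤ n) (F : Fin n → Set (ℝ × ℝ))
    (hcomp : ∀ i, IsCompact (F i)) (hconv : ∀ i, Convex ℝ (F i)) :
    ∃ a b : Fin n, ∃ u : ℝ × ℝ, ∃ c : ℝ, ‖u‖ = 1 ∧
      ∀ i, (F a ∩ F i).Nonempty → (F b ∩ F i).Nonempty →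
        (F i ∩ {x : ℝ × ℝ | x.1 * u.1 + x.2 * u.2 = c}).Nonempty := by
  have hne10 : ‖((1:ℝ), (0:ℝ))‖ = 1 := by
    simp [Prod.norm_def]
  by_cases hall : ∀ i j, (F i ∩ F j).Nonempty
  · -- all pairs intersect: vertical line through common projection point
    have hnonF : ∀ i, (F i).Nonempty := fun i => ((hall i i).mono (by simp))
    have hmin : ∀ i, ∃ p ∈ F i, ∀ z ∈ F i, p.1 ≤ z.1 := by
      intro i
      obtain ⟨p, hp, hpm⟩ := (hcomp i).exists_isMinOn (hnonF i) continuous_fst.continuousOn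
      exact ⟨p, hp, fun z hz => hpm hz⟩
    have hmax : ∀ i, ∃ q ∈ F i, ∀ z ∈ F i, z.1 ≤ q.1 := by
      intro i
      obtain ⟨q, hq, hqm⟩ := (hcomp i).exists_isMaxOn (hnonF i) continuous_fst.continuousOn
      exact ⟨q, hq, fun z hz => hqm hz⟩
    choose p hp hpmin using hmin
    choose q hq hqmax using hmax
    have hFin : Nonempty (Fin n) := ⟨⟨0, hn⟩⟩
    have huniv : (Finset.univ : Finset (Fin n)).Nonempty := Finset.univ_nonempty
    set c : ℝ := Finset.univ.sup' huniv (fun i => (p i).1) with hc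
    have hcle : ∀ j, c ≤ (q j).1 := by
      intro j
      apply Finset.sup'_le
      intro i _
      obtain ⟨z, hzi, hzj⟩ := hall i j
      exact le_trans (hpmin i z hzi) (hqmax j z hzj)
    have hlec : ∀ j, (p j).1 ≤ c := fun j => Finset.le_sup' (fun i => (p i).1) (Finset.mem_univ j)
    refine ⟨⟨0, hn⟩, ⟨0, hn⟩, (1, 0), c, hne10, ?_⟩
    intro i _ _
    obtain ⟨z, hz, hzc⟩ := cross_level (hconv i) (ContinuousLinearMap.fst ℝ ℝ ℝ)
      (hp i) (hq i) (by simpa using hlec i) (by simpa using hcle i)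
    exact ⟨z, hz, by simpa using hzc⟩
  · push_neg at hall
    obtain ⟨i, j, hij⟩ := hall
    by_cases hiE : (F i).Nonempty
    · by_cases hjE : (F j).Nonempty
      · -- both nonempty and disjoint: separate
        have hdisj : Disjoint (F i) (F j) := Set.disjoint_iff_inter_eq_empty.mpr hij
        obtain ⟨f, s, t, hfs, hst, hft⟩ :=
          geometric_hahn_banach_compact_closed (hconv i) (hcomp i) (hconv j)
            (hcomp j).isClosed hdisj
        have hrep : ∀ x : ℝ × ℝ, f x = x.1 * f (1, 0) + x.2 * f (0, 1) := by
          intro x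
          have hx : x = x.1 • ((1:ℝ), (0:ℝ)) + x.2 • ((0:ℝ), (1:ℝ)) := by
            ext <;> simp
          conv_lhs => rw [hx]
          rw [map_add, map_smul, map_smul]
          simp [smul_eq_mul]
        set w : ℝ × ℝ := (f (1, 0), f (0, 1)) with hw
        have hwne : w ≠ 0 := by
          intro h0
          have h1 : f (1, 0) = 0 := congrArg Prod.fst h0
          have h2 : f (0, 1) = 0 := congrArg Prod.snd h0
          obtain ⟨xi, hxi⟩ := hiE
          obtain ⟨yj, hyj⟩ := hjE
          have ha := hfs xi hxi
          have hb := hft yj hyj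
          rw [hrep xi, h1, h2] at ha
          rw [hrep yj, h1, h2] at hb
          simp at ha hb
          linarith
        have hwpos : (0:ℝ) < ‖w‖ := norm_pos_iff.mpr hwne
        refine ⟨i, j, ‖w‖⁻¹ • w, ‖w‖⁻¹ * ((s + t) / 2), norm_smul_inv_norm hwne, ?_⟩
        intro k hik hjk
        obtain ⟨x, hxi, hxk⟩ := hik
        obtain ⟨y, hyj, hyk⟩ := hjk
        have hgx : (‖w‖⁻¹ • f) x ≤ ‖w‖⁻¹ * ((s + t) / 2) := by
          have : f x < s := hfs x hxi
          have : f x ≤ (s + t) / 2 := by linarith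
          simpa [smul_eq_mul] using
            mul_le_mul_of_nonneg_left this (le_of_lt (inv_pos.mpr hwpos))
        have hgy : ‖w‖⁻¹ * ((s + t) / 2) ≤ (‖w‖⁻¹ • f) y := by
          have : t < f y := hft y hyj
          have h2 : (s + t) / 2 ≤ f y := by linarith
          simpa [smul_eq_mul] using
            mul_le_mul_of_nonneg_left h2 (le_of_lt (inv_pos.mpr hwpos))
        obtain ⟨z, hz, hzc⟩ := cross_level (hconv k) (‖w‖⁻¹ • f) hxk hyk hgx hgy
        refine ⟨z, hz, ?_⟩
        have : z.1 * (‖w‖⁻¹ • w).1 + z.2 * (‖w‖⁻¹ • w).2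
            = ‖w‖⁻¹ * f z := by
          simp only [Prod.smul_fst, Prod.smul_snd, smul_eq_mul, hw]
          rw [hrep z]; ring
        simp only [Set.mem_setOf_eq, this]
        simpa [smul_eq_mul] using hzc
      · -- F j empty: vacuous
        rw [Set.not_nonempty_iff_eq_empty] at hjE
        refine ⟨j, j, (1, 0), 0, hne10, ?_⟩
        intro k hk _
        exact absurd hk (by simp [hjE])
    · -- F i empty: vacuous
      rw [Set.not_nonempty_iff_eq_empty] at hiE
      refine ⟨i, i, (1, 0), 0, hne10, ?_⟩
      intro k hk _
      exact absurd hk (by simp [hiE])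
end

section
/- Let C_1, ..., C_m be compact convex sets in the plane with nonempty common intersection, m ≥ 2. Then there exist indices 1 ≤ k < l ≤ m such that the lexicographically maximal point of ∩_{i=1}^m C_i equals the lexicographically maximal point of C_k ∩ C_l. -/
/-- strict lexicographic "greater than `z`" -/
def LexGT (z p : ℝ × ℝ) : Prop := z.1 < p.1 ∨ (z.1 = p.1 ∧ z.2 < p.2)

lemma lexGT_of_not_le {z y : ℝ × ℝ} (h : ¬ lexLE y z) : LexGT z y := by
  unfold lexLE at h
  push_neg at h
  rcases lt_trichotomy z.1 y.1 with h1 | h1 | h1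
  · exact Or.inl h1
  · exact Or.inr ⟨h1, h.2 h1.symm⟩
  · exact absurd h1 (not_lt.2 h.1)

lemma not_lexLE_of_lexGT {z p : ℝ × ℝ} (h : LexGT z p) : ¬ lexLE p z := by
  rintro (g | ⟨g1, g2⟩) <;> rcases h with h | ⟨h1, h2⟩ <;> linarith

/-- slope of `p` as seen from `z`, with vertical slope `⊤`. -/
noncomputable def slp (z p : ℝ × ℝ) : WithTop ℝ :=
  if p.1 = z.1 then ⊤ else ((p.2 - z.2) / (p.1 - z.1) : ℝ)

lemma slp_eq_top {z p : ℝ × ℝ} (h : p.1 = z.1) : slp z p = ⊤ := by simp [slp, h]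

lemma fst_eq_of_slp_top {z p : ℝ × ℝ} (h : slp z p = ⊤) : p.1 = z.1 := by
  by_contra hc; simp [slp, hc] at h

lemma slp_coe_of {z p : ℝ × ℝ} {s : ℝ} (h1 : p.1 ≠ z.1)
    (h2 : p.2 - z.2 = s * (p.1 - z.1)) : slp z p = (s : WithTop ℝ) := by
  have hne : p.1 - z.1 ≠ 0 := sub_ne_zero.2 h1
  simp only [slp, h1, if_false]
  norm_cast
  rw [h2]
  field_simp

lemma snd_eq_of_slp_coe {z p : ℝ × ℝ} {s : ℝ} (h : slp z p = (s : WithTop ℝ)) :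
    p.1 ≠ z.1 ∧ p.2 - z.2 = s * (p.1 - z.1) := by
  by_cases hc : p.1 = z.1
  · simp [slp, hc] at h
  · refine ⟨hc, ?_⟩
    have h2 : ((p.2 - z.2) / (p.1 - z.1) : ℝ) = s := by
      have := h; simp [slp, hc] at this; exact_mod_cast this
    have hne : p.1 - z.1 ≠ 0 := sub_ne_zero.2 hc
    field_simp at h2
    linarith [h2]

lemma fst_pos_of_lexGT_coe {z p : ℝ × ℝ} {s : ℝ} (hgt : LexGT z p)
    (h : slp z p = (s : WithTop ℝ)) : 0 < p.1 - z.1 := by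
  rcases hgt with h1 | ⟨h1, _⟩
  · linarith
  · exact absurd (slp_eq_top h1.symm) (by simp [h])

/-- Key order-convexity lemma: slopes realized in a convex set at points
lex-greater than `z` form an order-convex set. -/
lemma slope_convex {C : Set (ℝ × ℝ)} (hC : Convex ℝ C) {z u v : ℝ × ℝ}
    (hu : u ∈ C) (hv : v ∈ C) (hu' : LexGT z u) (hv' : LexGT z v)
    {x : WithTop ℝ} (h1 : slp z u ≤ x) (h2 : x ≤ slp z v) :
    ∃ w ∈ C, LexGT z w ∧ slp z w = x := by
  cases x with
  | top =>
      exact ⟨v, hv, hv', le_antisymm le_top h2⟩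
  | coe s =>
      have hune : slp z u ≠ ⊤ := fun h => by simp [h] at h1
      obtain ⟨s0, hs0⟩ : ∃ s0 : ℝ, slp z u = (s0 : WithTop ℝ) := by
        cases hh : slp z u with
        | top => exact absurd hh hune
        | coe t => exact ⟨t, rfl⟩
      have hs0le : s0 ≤ s := by rw [hs0] at h1; exact_mod_cast h1
      obtain ⟨-, hu2⟩ := snd_eq_of_slp_coe hs0
      have ha : 0 < u.1 - z.1 := fst_pos_of_lexGT_coe hu' hs0
      cases hv1 : slp z v with
      | top =>
          have hvfst : v.1 = z.1 := fst_eq_of_slp_top hv1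
          have hvh : 0 < v.2 - z.2 := by
            rcases hv' with h' | ⟨_, h'⟩
            · linarith
            · linarith
          have hd : 0 < (v.2 - z.2) + (u.1 - z.1) * (s - s0) := by nlinarith
          set d : ℝ := (v.2 - z.2) + (u.1 - z.1) * (s - s0) with hd_def
          set lam : ℝ := (v.2 - z.2) / d with hlam_def
          have hlam0 : 0 < lam := div_pos hvh hd
          have hlam1 : lam ≤ 1 := by
            rw [hlam_def, div_le_one hd]; nlinarith
          set w : ℝ × ℝ := u + (1 - lam) • (v - u) with hw_def
          have hwC : w ∈ C := hC.add_smul_sub_mem hu hv ⟨by linarith, by linarith⟩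
          have hwfst : w.1 = u.1 + (1 - lam) * (v.1 - u.1) := rfl
          have hwsnd : w.2 = u.2 + (1 - lam) * (v.2 - u.2) := rfl
          have hfst' : w.1 - z.1 = lam * (u.1 - z.1) := by
            rw [hwfst, hvfst]; ring
          have hfstpos : 0 < w.1 - z.1 := by rw [hfst']; positivity
          have hsnd' : w.2 - z.2 = s * (w.1 - z.1) := by
            rw [hwsnd, hfst']
            have hdne : d ≠ 0 := ne_of_gt hd
            rw [hlam_def]
            field_simp
            nlinarith [hu2]
          exact ⟨w, hwC, Or.inl (by linarith), slp_coe_of (by linarith) hsnd'⟩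
      | coe s1 =>
          have hsle1 : s ≤ s1 := by rw [hv1] at h2; exact_mod_cast h2
          obtain ⟨-, hv2⟩ := snd_eq_of_slp_coe hv1
          have ha' : 0 < v.1 - z.1 := fst_pos_of_lexGT_coe hv' hv1
          by_cases hss : s0 = s1
          · have : s = s0 := le_antisymm (hss ▸ hsle1) hs0le
            exact ⟨u, hu, hu', by rw [hs0, this]⟩
          · have hs01 : s0 < s1 := lt_of_le_of_ne (by linarith) hss
            have hd : 0 < (u.1 - z.1) * (s - s0) + (v.1 - z.1) * (s1 - s) := by
              rcases lt_or_ge s0 s with h' | h'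
              · have : 0 < (u.1 - z.1) * (s - s0) := mul_pos ha (by linarith)
                nlinarith
              · have hs0s : s = s0 := le_antisymm h' hs0le
                have : 0 < (v.1 - z.1) * (s1 - s) := by
                  apply mul_pos ha'; rw [hs0s]; linarith
                nlinarith
            set d : ℝ := (u.1 - z.1) * (s - s0) + (v.1 - z.1) * (s1 - s) with hd_def
            set lam : ℝ := (v.1 - z.1) * (s1 - s) / d with hlam_def
            have hlam0 : 0 ≤ lam := by
              apply div_nonneg _ (le_of_lt hd)
              apply mul_nonneg (le_of_lt ha') (by linarith)
            have hlam1 : lam ≤ 1 := by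
              rw [hlam_def, div_le_one hd]
              nlinarith [mul_nonneg (le_of_lt ha) (sub_nonneg.2 hs0le)]
            set w : ℝ × ℝ := u + (1 - lam) • (v - u) with hw_def
            have hwC : w ∈ C := hC.add_smul_sub_mem hu hv ⟨by linarith, by linarith⟩
            have hwfst : w.1 = u.1 + (1 - lam) * (v.1 - u.1) := rfl
            have hwsnd : w.2 = u.2 + (1 - lam) * (v.2 - u.2) := rfl
            have hfst' : w.1 - z.1 = lam * (u.1 - z.1) + (1 - lam) * (v.1 - z.1) := by
              rw [hwfst]; ring
            have hfstpos : 0 < w.1 - z.1 := by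
              rw [hfst']
              rcases eq_or_lt_of_le hlam0 with h' | h'
              · rw [← h']; simpa using ha'
              · nlinarith [mul_nonneg (sub_nonneg.2 hlam1) (le_of_lt ha')]
            have hsnd' : w.2 - z.2 = s * (w.1 - z.1) := by
              rw [hwsnd, hfst']
              have hdne : d ≠ 0 := ne_of_gt hd
              have key : lam * (u.2 - z.2) + (1 - lam) * (v.2 - z.2)
                  = s * (lam * (u.1 - z.1) + (1 - lam) * (v.1 - z.1)) := by
                rw [hu2, hv2, hlam_def]
                field_simp
                ring
              calc u.2 + (1 - lam) * (v.2 - u.2) - z.2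
                  = lam * (u.2 - z.2) + (1 - lam) * (v.2 - z.2) := by ring
                _ = s * (lam * (u.1 - z.1) + (1 - lam) * (v.1 - z.1)) := key
            exact ⟨w, hwC, Or.inl (by linarith), slp_coe_of (by linarith) hsnd'⟩

/-- Lemma 8.1.2 of Matoušek: for compact convex sets `C₁, …, C_m` in the plane
with nonempty common intersection, the lexicographic maximum of the whole
intersection is already the lexicographic maximum of `C_k ∩ C_l` for some
pair `k < l`. -/
theorem stmt8 (m : ℕ) (hm : 2 ≤ m) (C : Fin m → Set (ℝ × ℝ))
    (hcomp : ∀ i, IsCompact (C i)) (hconv : ∀ i, Convex ℝ (C i))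
    (hne : (⋂ i, C i).Nonempty)
    (z : ℝ × ℝ) (hz : IsLexMax z (⋂ i, C i)) :
    ∃ k l : Fin m, k < l ∧ IsLexMax z (C k ∩ C l) := by
  by_contra hcon
  push_neg at hcon
  have hzC : ∀ i, z ∈ C i := fun i => Set.mem_iInter.1 hz.1 i
  have hnt : Nontrivial (Fin m) := Fin.nontrivial_iff_two_le.2 hm
  -- every pair of sets contains a point lex-greater than z
  have claim0 : ∀ i j : Fin m, i ≠ j → ∃ p, p ∈ C i ∧ p ∈ C j ∧ LexGT z p := by
    intro i j hij
    rcases lt_or_gt_of_ne hij with h | h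
    · have := hcon i j h
      rw [IsLexMax] at this
      push_neg at this
      obtain ⟨y, hy, hy2⟩ := this ⟨hzC i, hzC j⟩
      exact ⟨y, hy.1, hy.2, lexGT_of_not_le hy2⟩
    · have := hcon j i h
      rw [IsLexMax] at this
      push_neg at this
      obtain ⟨y, hy, hy2⟩ := this ⟨hzC j, hzC i⟩
      exact ⟨y, hy.2, hy.1, lexGT_of_not_le hy2⟩
  have claim : ∀ i j : Fin m, ∃ p, p ∈ C i ∧ p ∈ C j ∧ LexGT z p := by
    intro i j
    by_cases hij : i = j
    · obtain ⟨j', hj'⟩ := exists_ne i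
      obtain ⟨p, hp1, _, hp3⟩ := claim0 i j' (Ne.symm hj')
      exact ⟨p, hp1, hij ▸ hp1, hp3⟩
    · exact claim0 i j hij
  choose q hq1 hq2 hq3 using claim
  set s : Fin m → Fin m → WithTop ℝ := fun i j => slp z (q i j) with hs_def
  have hne' : (Finset.univ : Finset (Fin m)).Nonempty := Finset.univ_nonempty
  set x : WithTop ℝ := Finset.univ.sup' hne' (fun i => Finset.univ.inf' hne' (s i)) with hx_def
  obtain ⟨istar, -, histar⟩ := Finset.exists_mem_eq_sup' hne' (fun i => Finset.univ.inf' hne' (s i))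
  -- for each k, find a point of C k with slope exactly x, lex-greater than z
  have hwit : ∀ k : Fin m, ∃ w ∈ C k, LexGT z w ∧ slp z w = x := by
    intro k
    obtain ⟨jk, -, hjk⟩ := Finset.exists_mem_eq_inf' hne' (s k)
    have hlow : s k jk ≤ x := by
      rw [← hjk, hx_def]
      exact Finset.le_sup' (fun i => Finset.univ.inf' hne' (s i)) (Finset.mem_univ k)
    have hhigh : x ≤ s istar k := by
      rw [hx_def, histar]
      exact Finset.inf'_le _ (Finset.mem_univ k)
    exact slope_convex (hconv k) (hq1 k jk) (hq2 istar k) (hq3 k jk) (hq3 istar k) hlow hhigh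
  choose w hw1 hw2 hw3 using hwit
  -- build a common point lex-greater than z, contradiction
  have : ∃ p, (∀ k, p ∈ C k) ∧ LexGT z p := by
    cases hxval : x with
    | top =>
        have hvert : ∀ k, (w k).1 = z.1 := fun k => fst_eq_of_slp_top (by rw [hw3 k, hxval])
        have hpos : ∀ k, 0 < (w k).2 - z.2 := by
          intro k
          rcases hw2 k with h | ⟨_, h⟩
          · exact absurd (hvert k) (by intro hh; rw [hh] at h; exact lt_irrefl _ h)
          · linarith
        set h0 : ℝ := Finset.univ.inf' hne' (fun k => (w k).2 - z.2) with hh0_def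
        have hh0pos : 0 < h0 := (Finset.lt_inf'_iff hne').2 fun i _ => hpos i
        refine ⟨(z.1, z.2 + h0), fun k => ?_, Or.inr ⟨rfl, by simp; linarith⟩⟩
        have hle : h0 ≤ (w k).2 - z.2 := Finset.inf'_le _ (Finset.mem_univ k)
        have ht : h0 / ((w k).2 - z.2) ∈ Set.Icc (0:ℝ) 1 :=
          ⟨le_of_lt (div_pos hh0pos (hpos k)), (div_le_one (hpos k)).2 hle⟩
        have := (hconv k).add_smul_sub_mem (hzC k) (hw1 k) ht
        convert this using 1
        have hne2 : (w k).2 - z.2 ≠ 0 := ne_of_gt (hpos k)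
        have e1 : (z + (h0 / ((w k).2 - z.2)) • (w k - z)).1
            = z.1 + h0 / ((w k).2 - z.2) * ((w k).1 - z.1) := rfl
        have e2 : (z + (h0 / ((w k).2 - z.2)) • (w k - z)).2
            = z.2 + h0 / ((w k).2 - z.2) * ((w k).2 - z.2) := rfl
        apply Prod.ext
        · rw [e1, hvert k]; simp
        · rw [e2]; field_simp
    | coe sv =>
        have hslope : ∀ k, (w k).2 - z.2 = sv * ((w k).1 - z.1) :=
          fun k => (snd_eq_of_slp_coe (by rw [hw3 k, hxval])).2
        have hpos : ∀ k, 0 < (w k).1 - z.1 :=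
          fun k => fst_pos_of_lexGT_coe (hw2 k) (by rw [hw3 k, hxval])
        set a0 : ℝ := Finset.univ.inf' hne' (fun k => (w k).1 - z.1) with ha0_def
        have ha0pos : 0 < a0 := (Finset.lt_inf'_iff hne').2 fun i _ => hpos i
        refine ⟨(z.1 + a0, z.2 + sv * a0), fun k => ?_, Or.inl (by simp; linarith)⟩
        have hle : a0 ≤ (w k).1 - z.1 := Finset.inf'_le _ (Finset.mem_univ k)
        have ht : a0 / ((w k).1 - z.1) ∈ Set.Icc (0:ℝ) 1 :=
          ⟨le_of_lt (div_pos ha0pos (hpos k)), (div_le_one (hpos k)).2 hle⟩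
        have := (hconv k).add_smul_sub_mem (hzC k) (hw1 k) ht
        convert this using 1
        have hne2 : (w k).1 - z.1 ≠ 0 := ne_of_gt (hpos k)
        have e1 : (z + (a0 / ((w k).1 - z.1)) • (w k - z)).1
            = z.1 + a0 / ((w k).1 - z.1) * ((w k).1 - z.1) := rfl
        have e2 : (z + (a0 / ((w k).1 - z.1)) • (w k - z)).2
            = z.2 + a0 / ((w k).1 - z.1) * ((w k).2 - z.2) := rfl
        apply Prod.ext
        · rw [e1]; field_simp
        · rw [e2, hslope k]; field_simp
  obtain ⟨p, hp1, hp2⟩ := this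
  exact not_lexLE_of_lexGT hp2 (hz.2 p (Set.mem_iInter.2 hp1))
end

section
/- Assume Kalai's Upper Bound Theorem: if a family of p convex sets in ℝ^d has no intersecting (d + s + 1)-tuple (s ≥ 0), then for every q the number of intersecting q-tuples is at most Σ_{i=0}^{d} C(s, q-i)·C(p-s, i). Deduce: if a finite family F of compact convex sets in ℝ^d with |F| ≥ p satisfies the (p,q)_r property with r ≥ 1 + Σ_{i=0}^{d} C(q+k-d-1, q-i)·C(p-q-k+d+1, i) for some k ≥ 0 with q + k ≤ p, then F satisfies the (p, q+k) property. -/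
open scoped Classical

/-- From Kalai's Upper Bound Theorem (assumed as hypothesis `hUBT`): a family
satisfying the `(p,q)_r` property with
`r ≥ 1 + Σ_{i=0}^d C(q+k-d-1, q-i)·C(p-q-k+d+1, i)` satisfies the `(p, q+k)`
property. -/
theorem stmt12 (d p q k r n : ℕ) (hd : 1 ≤ d) (hq : d + 1 ≤ q)
    (hqk : q + k ≤ p) (hn : p ≤ n)
    (hUBT : ∀ (N : ℕ) (G : Fin N → Set (EuclideanSpace ℝ (Fin d))) (s : ℕ),
      (∀ i, Convex ℝ (G i)) →
      (∀ T : Finset (Fin N), T.card = d + s + 1 → ¬ (⋂ i ∈ T, G i).Nonempty) →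
      ∀ q' : ℕ,
        ((Finset.univ.powersetCard q').filter
            (fun T : Finset (Fin N) => (⋂ i ∈ T, G i).Nonempty)).card ≤
          ∑ i ∈ Finset.range (d + 1), (s.choose (q' - i)) * ((N - s).choose i))
    (F : Fin n → Set (EuclideanSpace ℝ (Fin d)))
    (hcomp : ∀ i, IsCompact (F i)) (hconv : ∀ i, Convex ℝ (F i))
    (hr : 1 + ∑ i ∈ Finset.range (d + 1),
        ((q + k - (d + 1)).choose (q - i)) * ((p - (q + k) + d + 1).choose i) ≤ r)
    (hprop : ∀ P : Finset (Fin n), P.card = p →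
      r ≤ ((P.powersetCard q).filter
            (fun Q : Finset (Fin n) => (⋂ i ∈ Q, F i).Nonempty)).card) :
    ∀ P : Finset (Fin n), P.card = p →
      ∃ Q ⊆ P, Q.card = q + k ∧ (⋂ i ∈ Q, F i).Nonempty := by
  intro P hP
  by_contra hcon
  push_neg at hcon
  have hP' : Fintype.card {x // x ∈ P} = p := by
    simpa using hP
  let e : Fin p ≃ {x // x ∈ P} := (Fintype.equivFinOfCardEq hP').symm
  let ε : Fin p ↪ Fin n :=
    ⟨fun j => (e j : Fin n), fun a b hab => e.injective (Subtype.val_injective hab)⟩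
  have hmem : ∀ j, ε j ∈ P := fun j => (e j).2
  have himg : Finset.univ.map ε = P := by
    apply Finset.eq_of_subset_of_card_le
    · intro x hx
      rcases Finset.mem_map.mp hx with ⟨j, _, rfl⟩
      exact hmem j
    · simp [hP]
  have hiInter : ∀ T : Finset (Fin p),
      (⋂ i ∈ T.map ε, F i) = ⋂ j ∈ T, F (ε j) := by
    intro T
    ext x
    simp
  have hds : d + (q + k - (d + 1)) + 1 = q + k := by omega
  have hnoqk : ∀ T : Finset (Fin p), T.card = d + (q + k - (d + 1)) + 1 →
      ¬ (⋂ j ∈ T, F (ε j)).Nonempty := by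
    intro T hT hne
    rw [← hiInter] at hne
    rw [hcon (T.map ε) ?_ (by simpa [hds] using hT)] at hne
    · exact Set.not_nonempty_empty hne
    · rw [← himg]; exact Finset.map_subset_map.mpr (Finset.subset_univ T)
  have hub := hUBT p (fun j => F (ε j)) (q + k - (d + 1))
    (fun j => hconv (ε j)) hnoqk q
  have hps : p - (q + k - (d + 1)) = p - (q + k) + d + 1 := by omega
  rw [hps] at hub
  have hcard : ((Finset.univ.powersetCard q).filter
        (fun T : Finset (Fin p) => (⋂ j ∈ T, F (ε j)).Nonempty)).card =
      ((P.powersetCard q).filter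
        (fun Q : Finset (Fin n) => (⋂ i ∈ Q, F i).Nonempty)).card := by
    apply Finset.card_bij (fun T _ => T.map ε)
    · intro T hT
      simp only [Finset.mem_filter, Finset.mem_powersetCard] at hT ⊢
      refine ⟨⟨?_, by simp [hT.1.2]⟩, by rw [hiInter]; exact hT.2⟩
      rw [← himg]; exact Finset.map_subset_map.mpr (Finset.subset_univ T)
    · intro a _ b _ hab
      exact Finset.map_injective ε hab
    · intro Q hQ
      simp only [Finset.mem_filter, Finset.mem_powersetCard] at hQ
      have hsub : Q ⊆ Finset.univ.map ε := by rw [himg]; exact hQ.1.1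
      rcases Finset.subset_map_iff.mp hsub with ⟨T, -, rfl⟩
      refine ⟨T, ?_, rfl⟩
      simp only [Finset.mem_filter, Finset.mem_powersetCard]
      have hc : T.card = q := by simpa [Finset.card_map] using hQ.1.2
      exact ⟨⟨Finset.subset_univ T, hc⟩, by rw [← hiInter]; exact hQ.2⟩
  rw [hcard] at hub
  have h1 := hprop P hP
  omega
end
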